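/- Let A = diag(1,4), X the 2×2 matrix with diagonal entries 1 and off-diagonal entries 1/2, and B = XAX. Then Tr(A ♮ B) = 5 while Tr(A # B) = 40/√73 < 5; consequently Tr(A + B + 2(A#B)) < Tr(A + B + 2(A ♮ B)), so the eigenvalue vector of A + B + 2(A ♮ B) is not weakly majorized by that of A + B + 2(A # B). -/

import Mathlib

/-! Both means are computed in closed form. Every square root that occurs is the square root of
a 2×2 positive semidefinite matrix `D`, which Cayley–Hamilton makes explicit:
`√D = (D + √(det D)) / √(tr D + 2 √(det D))`. This gives `A # B = (11, 10; 10, 29) / √73`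
and `A⁻¹ # B = X`. Cyclicity of the trace gives `Tr(A ♮ B) = Tr((A⁻¹ # B) A) = Tr(X A) = 5`.
Since `√73 > 8`, the trace of the Kubo–Ando Heron expression is strictly smaller, which
rules out weak majorization already for the sum of all eigenvalues. -/

open Matrix ComplexOrder

namespace Matrix.PosSemidef

variable {m 𝕜 : Type*} [Fintype m] [DecidableEq m] [RCLike 𝕜]

noncomputable def sqrt {A : Matrix m m 𝕜} (hA : A.PosSemidef) : Matrix m m 𝕜 :=
  hA.1.eigenvectorUnitary.1 * diagonal ((↑) ∘ (√·) ∘ hA.1.eigenvalues) *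
    (star hA.1.eigenvectorUnitary : Matrix m m 𝕜)

lemma posSemidef_sqrt {A : Matrix m m 𝕜} (hA : A.PosSemidef) : PosSemidef hA.sqrt := by
  apply PosSemidef.mul_mul_conjTranspose_same
  refine posSemidef_diagonal_iff.mpr fun i ↦ ?_
  rw [Function.comp_apply, RCLike.nonneg_iff]
  constructor
  · simp only [RCLike.ofReal_re]; exact Real.sqrt_nonneg _
  · simp only [RCLike.ofReal_im]

end Matrix.PosSemidef

namespace Heron

variable {n : ℕ}

def WeakMaj {n : ℕ} (x y : Fin n → ℝ) : Prop :=
  ∀ s : Finset (Fin n), ∃ t : Finset (Fin n),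
    t.card = s.card ∧ ∑ i ∈ s, x i ≤ ∑ i ∈ t, y i

def Maj {n : ℕ} (x y : Fin n → ℝ) : Prop :=
  WeakMaj x y ∧ ∑ i, x i = ∑ i, y i

lemma sandwich_posSemidef {S T : Matrix (Fin n) (Fin n) ℂ} (hS : S.IsHermitian)
    (hT : T.PosSemidef) : (S * T * S).PosSemidef := by
  have h := hT.mul_mul_conjTranspose_same S
  rwa [hS.eq] at h

noncomputable def geomMean {A B : Matrix (Fin n) (Fin n) ℂ}
    (hA : A.PosDef) (hB : B.PosDef) : Matrix (Fin n) (Fin n) ℂ :=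
  hA.posSemidef.sqrt *
    (sandwich_posSemidef hA.posSemidef.posSemidef_sqrt.isHermitian.inv
        hB.posSemidef).sqrt *
    hA.posSemidef.sqrt

lemma geomMean_posSemidef {A B : Matrix (Fin n) (Fin n) ℂ}
    (hA : A.PosDef) (hB : B.PosDef) : (geomMean hA hB).PosSemidef :=
  sandwich_posSemidef hA.posSemidef.posSemidef_sqrt.isHermitian
    (Matrix.PosSemidef.posSemidef_sqrt _)

noncomputable def specMean {A B : Matrix (Fin n) (Fin n) ℂ}
    (hA : A.PosDef) (hB : B.PosDef) : Matrix (Fin n) (Fin n) ℂ :=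
  (geomMean_posSemidef hA.inv hB).sqrt * A * (geomMean_posSemidef hA.inv hB).sqrt

def HasPosSpectrum (M : Matrix (Fin n) (Fin n) ℂ) : Prop :=
  ∀ z ∈ spectrum ℂ M, 0 < z.re ∧ z.im = 0

def IsPrincipalSqrt (M S : Matrix (Fin n) (Fin n) ℂ) : Prop :=
  S * S = M ∧ HasPosSpectrum S

noncomputable def absMat (Y : Matrix (Fin n) (Fin n) ℂ) : Matrix (Fin n) (Fin n) ℂ :=
  (Matrix.posSemidef_conjTranspose_mul_self Y).sqrt

noncomputable def posPart (H : Matrix (Fin n) (Fin n) ℂ) : Matrix (Fin n) (Fin n) ℂ :=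
  ((1 : ℂ) / 2) • (absMat H + H)

noncomputable def A18 : Matrix (Fin 2) (Fin 2) ℂ := !![1, 0; 0, 4]

noncomputable def X18 : Matrix (Fin 2) (Fin 2) ℂ := !![1, 1/2; 1/2, 1]

noncomputable def B18 : Matrix (Fin 2) (Fin 2) ℂ := X18 * A18 * X18

end Heron

namespace Matrix

lemma mul_self_fin_two {R : Type*} [CommRing R] (D : Matrix (Fin 2) (Fin 2) R) :
    D * D = D.trace • D - D.det • 1 := by
  ext i j
  fin_cases i <;> fin_cases j <;>
    simp [mul_apply, trace_fin_two, det_fin_two, Fin.sum_univ_two] <;> ring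

namespace PosSemidef

variable {m 𝕜 : Type*} [Fintype m] [DecidableEq m] [RCLike 𝕜]

open scoped MatrixOrder Matrix.Norms.L2Operator in
lemma sqrt_eq_cfcSqrt {A : Matrix m m 𝕜} (hA : A.PosSemidef) : hA.sqrt = CFC.sqrt A := by
  rw [CFC.sqrt_eq_real_sqrt A hA.nonneg, cfcₙ_eq_cfc, hA.1.cfc_eq]; rfl

open scoped MatrixOrder Matrix.Norms.L2Operator in
lemma sqrt_mul_self {A : Matrix m m 𝕜} (hA : A.PosSemidef) : hA.sqrt * hA.sqrt = A := by
  rw [sqrt_eq_cfcSqrt]; exact CFC.sqrt_mul_sqrt_self A hA.nonneg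

open scoped MatrixOrder Matrix.Norms.L2Operator in
lemma sqrt_eq_of_mul_self {A S : Matrix m m 𝕜} (hA : A.PosSemidef) (hS : S.PosSemidef)
    (h : S * S = A) : hA.sqrt = S := by
  rw [sqrt_eq_cfcSqrt, CFC.sqrt_eq_iff A S hA.nonneg hS.nonneg]; exact h

lemma sqrt_fin_two {D : Matrix (Fin 2) (Fin 2) 𝕜} (hD : D.PosSemidef) {s t : ℝ}
    (hs : 0 ≤ s) (ht : 0 ≤ t) (hdet : D.det = ((s ^ 2 : ℝ) : 𝕜))
    (htr : D.trace = ((t ^ 2 - 2 * s : ℝ) : 𝕜)) :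
    hD.sqrt = ((t⁻¹ : ℝ) : 𝕜) • (D + (s : 𝕜) • 1) := by
  have hsum : (D + (s : 𝕜) • 1).PosSemidef :=
    hD.add (PosSemidef.one.smul (RCLike.ofReal_nonneg.mpr hs))
  refine sqrt_eq_of_mul_self hD (hsum.smul (RCLike.ofReal_nonneg.mpr (inv_nonneg.mpr ht))) ?_
  rcases ht.eq_or_lt with rfl | ht
  · have hs0 : s = 0 := by
      have h0 := hD.trace_nonneg
      rw [htr, RCLike.ofReal_nonneg] at h0
      linarith
    have hD0 : D = 0 := hD.trace_eq_zero_iff.mp (by simp [htr, hs0])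
    simp [hD0, hs0]
  · -- Cayley–Hamilton: `(D + s)² = D² + 2 s D + s² = (tr D + 2 s) D = t² D`.
    have key : (D + (s : 𝕜) • 1) * (D + (s : 𝕜) • 1) = ((t ^ 2 : ℝ) : 𝕜) • D := by
      rw [add_mul, mul_add, mul_add, mul_self_fin_two, hdet, htr]
      simp only [Matrix.smul_mul, Matrix.mul_smul, mul_one, one_mul]
      push_cast
      module
    rw [Matrix.smul_mul, Matrix.mul_smul, smul_smul, key, smul_smul, ← RCLike.ofReal_mul,
      ← RCLike.ofReal_mul]
    field_simp
    simp

end PosSemidef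

end Matrix

namespace Heron

variable {n : ℕ}

lemma WeakMaj.sum_le {x y : Fin n → ℝ} (h : WeakMaj x y) : ∑ i, x i ≤ ∑ i, y i := by
  obtain ⟨t, ht, hle⟩ := h Finset.univ
  rwa [Finset.eq_univ_of_card t ht] at hle

lemma geomMean_eq_of_sqrt {A B S R : Matrix (Fin n) (Fin n) ℂ} (hA : A.PosDef) (hB : B.PosDef)
    (hS : hA.posSemidef.sqrt = S) (hR : ∀ h : (S⁻¹ * B * S⁻¹).PosSemidef, h.sqrt = R) :
    geomMean hA hB = S * R * S := by
  subst hS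
  rw [geomMean, hR]

lemma trace_specMean {A B : Matrix (Fin n) (Fin n) ℂ} (hA : A.PosDef) (hB : B.PosDef) :
    (specMean hA hB).trace = (geomMean hA.inv hB * A).trace := by
  rw [specMean, trace_mul_cycle, PosSemidef.sqrt_mul_self]

lemma B18_eq : B18 = !![2, 5/2; 5/2, 17/4] := by
  simp only [B18, X18, A18, mul_fin_two]
  norm_num

lemma A18_sqrt (hA : A18.PosDef) : hA.posSemidef.sqrt = !![1, 0; 0, 2] := by
  rw [hA.posSemidef.sqrt_fin_two (s := 2) (t := 3) (by norm_num) (by norm_num)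
    (by simp [A18, det_fin_two]; norm_num) (by simp [A18, trace_fin_two]; norm_num)]
  ext i j; fin_cases i <;> fin_cases j <;> norm_num [A18]

lemma A18_inv_sqrt (hA : A18.PosDef) : hA.inv.posSemidef.sqrt = !![1, 0; 0, 1/2] := by
  have hinv : A18⁻¹ = !![1, 0; 0, 1/4] := by
    simp [A18, inv_def, adjugate_fin_two_of]
  rw [hA.inv.posSemidef.sqrt_fin_two (s := 1/2) (t := 3/2) (by norm_num) (by norm_num)
    (by simp [hinv, det_fin_two]; norm_num) (by simp [hinv, trace_fin_two]; norm_num)]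
  ext i j; fin_cases i <;> fin_cases j <;> norm_num [hinv]

lemma geomMean_A18_B18 (hA : A18.PosDef) (hB : B18.PosDef) :
    geomMean hA hB = (((√73)⁻¹ : ℝ) : ℂ) • !![11, 10; 10, 29] := by
  have hC : (!![1, 0; 0, 2]⁻¹ * B18 * !![1, 0; 0, 2]⁻¹ : Matrix (Fin 2) (Fin 2) ℂ)
      = !![2, 5/4; 5/4, 17/16] := by
    simp [inv_def, adjugate_fin_two_of, B18_eq]
    norm_num
  have ht : (√73 / 4) ^ 2 - 2 * (3 / 4) = (49 / 16 : ℝ) := by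
    rw [div_pow, Real.sq_sqrt (by norm_num)]; norm_num
  have hR : ∀ h : PosSemidef (!![1, 0; 0, 2]⁻¹ * B18 * !![1, 0; 0, 2]⁻¹ :
      Matrix (Fin 2) (Fin 2) ℂ),
      h.sqrt = (((√73)⁻¹ : ℝ) : ℂ) • !![11, 5; 5, 29/4] := fun h ↦ by
    rw [h.sqrt_fin_two (s := 3/4) (t := √73 / 4) (by norm_num) (by positivity)
      (by rw [hC]; simp [det_fin_two]; norm_num) (by rw [hC, ht]; simp [trace_fin_two]; norm_num),
      hC]
    ext i j; fin_cases i <;> fin_cases j <;> simp <;> field_simp <;> norm_num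
  rw [geomMean_eq_of_sqrt hA hB (A18_sqrt hA) hR]
  ext i j; fin_cases i <;> fin_cases j <;> simp <;> ring

lemma geomMean_A18_inv_B18 (hA : A18.PosDef) (hB : B18.PosDef) :
    geomMean hA.inv hB = X18 := by
  have hD : (!![1, 0; 0, 1/2]⁻¹ * B18 * !![1, 0; 0, 1/2]⁻¹ : Matrix (Fin 2) (Fin 2) ℂ)
      = !![2, 5; 5, 17] := by
    simp [inv_def, adjugate_fin_two_of, B18_eq]
    norm_num
  have hR : ∀ h : PosSemidef (!![1, 0; 0, 1/2]⁻¹ * B18 * !![1, 0; 0, 1/2]⁻¹ :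
      Matrix (Fin 2) (Fin 2) ℂ), h.sqrt = !![1, 1; 1, 4] := fun h ↦ by
    rw [h.sqrt_fin_two (s := 3) (t := 5) (by norm_num) (by norm_num)
      (by rw [hD]; simp [det_fin_two]; norm_num) (by rw [hD]; simp [trace_fin_two]; norm_num), hD]
    ext i j; fin_cases i <;> fin_cases j <;> norm_num
  rw [geomMean_eq_of_sqrt hA.inv hB (A18_inv_sqrt hA) hR]
  ext i j; fin_cases i <;> fin_cases j <;> norm_num [X18]

/-- the explicit 2×2 example: `Tr(A ♮ B) = 5`,
`Tr(A # B) = 40/√73 < 5`, hence the trace of the Kubo–Ando Heron expression is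
strictly smaller, so `A + B + 2(A ♮ B)` is not weakly majorized by
`A + B + 2(A # B)`. -/
theorem trace_counterexample (hA : A18.PosDef) (hB : B18.PosDef)
    (h1 : (A18 + B18 + (2 : ℂ) • specMean hA hB).IsHermitian)
    (h2 : (A18 + B18 + (2 : ℂ) • geomMean hA hB).IsHermitian) :
    (specMean hA hB).trace = 5 ∧
    (geomMean hA hB).trace = ((40 / Real.sqrt 73 : ℝ) : ℂ) ∧
    (40 / Real.sqrt 73 : ℝ) < 5 ∧
    (A18 + B18 + (2 : ℂ) • geomMean hA hB).trace.re
      < (A18 + B18 + (2 : ℂ) • specMean hA hB).trace.re ∧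
    ¬ WeakMaj h1.eigenvalues h2.eigenvalues := by
  have hspec : (specMean hA hB).trace = 5 := by
    rw [trace_specMean hA hB, geomMean_A18_inv_B18 hA hB]
    norm_num [X18, A18, trace_fin_two]
  have hgeom : (geomMean hA hB).trace = ((40 / Real.sqrt 73 : ℝ) : ℂ) := by
    rw [geomMean_A18_B18, trace_smul, trace_fin_two]
    norm_num
    ring
  have hlt : (40 / Real.sqrt 73 : ℝ) < 5 := by
    have h8 : (8 : ℝ) < √73 := (Real.lt_sqrt (by norm_num)).mpr (by norm_num)
    rw [div_lt_iff₀ (by positivity)]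
    linarith
  have htrace : (A18 + B18 + (2 : ℂ) • geomMean hA hB).trace.re
      < (A18 + B18 + (2 : ℂ) • specMean hA hB).trace.re := by
    simpa [trace_add, trace_smul, hspec, hgeom] using hlt
  refine ⟨hspec, hgeom, hlt, htrace, fun hW ↦ htrace.not_ge ?_⟩
  simpa [h1.trace_eq_sum_eigenvalues, h2.trace_eq_sum_eigenvalues] using hW.sum_le

end Heron
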